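/- arXiv:1710.11579 — 4 statements merged into one kernel-verified Lean document; each statement's English description precedes it below -/
import Mathlib

section
/- For all i, j ∈ ℤ, the operators t_i on V_F satisfy the Clifford relations: t_i ∘ t_i = 0; t_i ∘ t_j + t_j ∘ t_i = 0 whenever |i−j| > 1; and t_i ∘ t_{i+1} + t_{i+1} ∘ t_i = id_{V_F}. -/
/-- The defining property of the set `𝓘𝓜`: strictly increasing sequences of even
integers which eventually satisfy `x_i = 2i + 2k` for some charge `k ∈ ℤ`. -/
def IMprop (x : ℕ → ℤ) : Prop :=
  StrictMono x ∧ (∀ i, Even (x i)) ∧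
    ∃ k : ℤ, ∃ N : ℕ, ∀ i : ℕ, N ≤ i → x i = 2 * ((i : ℤ) + 1) + 2 * k

/-- The set `𝓘𝓜` of basis sequences (`0`-based indexing: entry `i` is `x_{i+1}`). -/
def IM : Type := {x : ℕ → ℤ // IMprop x}

/-- The fermionic Fock space `V_F`, the free abelian group on the basis `𝓘𝓜`. -/
abbrev VF : Type := IM →₀ ℤ

lemma IM.exists_ge (x : IM) (m : ℤ) : ∃ N : ℕ, m ≤ x.1 N := by
  obtain ⟨-, -, k, N, hN⟩ := x.2
  refine ⟨N + (m - x.1 N).toNat, ?_⟩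
  have h1 := hN N le_rfl
  have h2 := hN (N + (m - x.1 N).toNat) (Nat.le_add_right _ _)
  have h3 : (m - x.1 N) ≤ ((m - x.1 N).toNat : ℤ) := Int.self_le_toNat _
  have h4 : (0 : ℤ) ≤ ((m - x.1 N).toNat : ℤ) := Int.natCast_nonneg _
  push_cast at h2
  omega

/-- The position where `2j` is to be inserted into (or found in) `x`: the least
index `N` with `2j ≤ x N`, i.e. the number of entries of `x` smaller than `2j`. -/
def posIdx (j : ℤ) (x : IM) : ℕ := Nat.find (IM.exists_ge x (2 * j))

lemma posIdx_le (j : ℤ) (x : IM) : 2 * j ≤ x.1 (posIdx j x) :=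
  Nat.find_spec (IM.exists_ge x (2 * j))

lemma posIdx_lt (j : ℤ) (x : IM) : ∀ i, i < posIdx j x → x.1 i < 2 * j := by
  intro i hi
  have := Nat.find_min (IM.exists_ge x (2 * j)) hi
  omega

/-- Insertion of a value `a` into a sequence at position `p`. -/
def insSeq (x : ℕ → ℤ) (p : ℕ) (a : ℤ) : ℕ → ℤ :=
  fun i => if i < p then x i else if i = p then a else x (i - 1)

/-- Deletion of the entry at position `p` of a sequence. -/
def delSeq (x : ℕ → ℤ) (p : ℕ) : ℕ → ℤ :=
  fun i => if i < p then x i else x (i + 1)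

lemma insSeq_mem (x : ℕ → ℤ) (hx : IMprop x) (p : ℕ) (a : ℤ) (ha : Even a)
    (hlow : ∀ i, i < p → x i < a) (hhigh : a < x p) :
    IMprop (insSeq x p a) := by
  obtain ⟨hm, he, k, N, hN⟩ := hx
  refine ⟨strictMono_nat_of_lt_succ ?_, ?_, k - 1, max N p + 1, ?_⟩
  · intro i
    by_cases h1 : i + 1 < p
    · have hi : i < p := by omega
      simp only [insSeq, if_pos hi, if_pos h1]
      exact hm (Nat.lt_succ_self i)
    · by_cases h2 : i + 1 = p
      · have hi : i < p := by omega
        simp only [insSeq, if_pos hi, if_neg h1, if_pos h2]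
        exact hlow i hi
      · by_cases h3 : i = p
        · have hnl : ¬ i < p := by omega
          simp only [insSeq, if_neg hnl, if_pos h3, if_neg h1, if_neg h2]
          have e1 : i + 1 - 1 = i := by omega
          rw [e1, h3]
          exact hhigh
        · have hnl : ¬ i < p := by omega
          simp only [insSeq, if_neg hnl, if_neg h3, if_neg h1, if_neg h2]
          have e1 : i + 1 - 1 = i := by omega
          rw [e1]
          exact hm (by omega : i - 1 < i)
  · intro i
    by_cases h1 : i < p
    · simpa [insSeq, if_pos h1] using he i
    · by_cases h2 : i = p
      · simpa [insSeq, h1, h2] using ha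
      · simpa [insSeq, h1, h2] using he (i - 1)
  · intro i hi
    have h1 : ¬ i < p := by omega
    have h2 : ¬ i = p := by omega
    simp only [insSeq, if_neg h1, if_neg h2]
    rw [hN (i - 1) (by omega)]
    rw [Nat.cast_sub (by omega : 1 ≤ i)]
    push_cast
    ring

lemma delSeq_mem (x : ℕ → ℤ) (hx : IMprop x) (p : ℕ) : IMprop (delSeq x p) := by
  obtain ⟨hm, he, k, N, hN⟩ := hx
  refine ⟨strictMono_nat_of_lt_succ ?_, ?_, k + 1, max N p, ?_⟩
  · intro i
    by_cases h1 : i + 1 < p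
    · simp only [delSeq, if_pos (by omega : i < p), if_pos h1]
      exact hm (Nat.lt_succ_self i)
    · by_cases h2 : i < p
      · simp only [delSeq, if_pos h2, if_neg h1]
        exact hm (by omega : i < i + 1 + 1)
      · simp only [delSeq, if_neg h2, if_neg h1]
        exact hm (by omega : i + 1 < i + 1 + 1)
  · intro i
    by_cases h1 : i < p
    · simpa [delSeq, h1] using he i
    · simpa [delSeq, h1] using he (i + 1)
  · intro i hi
    simp only [delSeq, if_neg (by omega : ¬ i < p)]
    rw [hN (i + 1) (by omega)]
    push_cast
    ring

/-- The creating operator `ψ_j` on a basis element: zero if `2j` occurs in `x`,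
and otherwise `(−1)^n` times the basis element obtained by inserting `2j`,
where `n` is the number of entries of `x` smaller than `2j`. -/
noncomputable def psiB (j : ℤ) (x : IM) : VF :=
  if h : x.1 (posIdx j x) = 2 * j then 0
  else ((-1 : ℤ) ^ (posIdx j x)) •
    Finsupp.single (⟨insSeq x.1 (posIdx j x) (2 * j),
      insSeq_mem x.1 x.2 (posIdx j x) (2 * j) (even_two_mul j) (posIdx_lt j x)
        (lt_of_le_of_ne (posIdx_le j x) (fun hh => h hh.symm))⟩ : IM) 1

/-- The annihilating operator `ψ_j^*` on a basis element: zero if `2j` does not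
occur in `x`, and otherwise `(−1)^{n−1}` times the basis element obtained by
deleting the entry `x_n = 2j`. -/
noncomputable def psiStarB (j : ℤ) (x : IM) : VF :=
  if _ : x.1 (posIdx j x) = 2 * j then
    ((-1 : ℤ) ^ (posIdx j x)) •
      Finsupp.single (⟨delSeq x.1 (posIdx j x), delSeq_mem x.1 x.2 (posIdx j x)⟩ : IM) 1
  else 0

/-- The creating operator `ψ_j : V_F → V_F`. -/
noncomputable def psiOp (j : ℤ) : VF →ₗ[ℤ] VF := Finsupp.lift VF ℤ IM (psiB j)

/-- The annihilating operator `ψ_j^* : V_F → V_F`. -/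
noncomputable def psiStarOp (j : ℤ) : VF →ₗ[ℤ] VF := Finsupp.lift VF ℤ IM (psiStarB j)

/-- The Clifford operators: `t_{2j} = ψ_j` and `t_{2j−1} = ψ_j^* + ψ_{j−1}^*`. -/
noncomputable def tOp (m : ℤ) : VF →ₗ[ℤ] VF :=
  if m % 2 = 0 then psiOp (m / 2)
  else psiStarOp ((m + 1) / 2) + psiStarOp ((m + 1) / 2 - 1)

/-!
A basis vector `x` is determined by its set of entries `range x ⊆ 2ℤ`: `ψ_j` adds and `ψ_j^*`
removes the entry `2j`, with sign `(-1)^n`, `n` the number of entries below `2j`. Adding or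
removing `2b` changes that count for `2a` by one exactly when `b < a`, so for `a ≠ b` the two
orders of applying a pair of these operators reach the same basis vector with opposite signs.
This gives the canonical anticommutation relations for `ψ, ψ^*`, and the Clifford relations for
`t_{2j} = ψ_j`, `t_{2j+1} = ψ_{j+1}^* + ψ_j^*` follow from them in any ring by expanding
anticommutators.
-/

open Set

lemma neg_one_pow_add_neg_one_pow {R : Type*} [Ring R] {m n : ℕ} (h : Odd (m + n)) :
    (-1 : R) ^ m + (-1) ^ n = 0 := by
  rcases Nat.even_or_odd m with hm | hm
  · rw [hm.neg_one_pow, ((Nat.odd_add'.1 h).2 hm).neg_one_pow, add_neg_cancel]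
  · rw [hm.neg_one_pow, ((Nat.odd_add.1 h).1 hm).neg_one_pow, neg_add_cancel]

lemma neg_one_pow_smul_add_neg_one_pow_smul {M : Type*} [AddCommGroup M] (v : M) {m n : ℕ}
    (h : Odd (m + n)) : (-1 : ℤ) ^ m • v + (-1 : ℤ) ^ n • v = 0 := by
  rw [← add_smul, neg_one_pow_add_neg_one_pow h, zero_smul]

lemma Finsupp.lhom_ext_single_one {R α M : Type*} [Semiring R] [AddCommMonoid M] [Module R M]
    {f g : (α →₀ R) →ₗ[R] M} (h : ∀ a, f (Finsupp.single a 1) = g (Finsupp.single a 1)) :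
    f = g :=
  Finsupp.basisSingleOne.ext (by simpa using h)

section CAR

structure IsCAR {R : Type*} [Ring R] (ψ ψs : ℤ → R) : Prop where
  mul_self (a : ℤ) : ψ a * ψ a = 0
  star_mul_self (a : ℤ) : ψs a * ψs a = 0
  anticomm (a b : ℤ) : ψ a * ψ b + ψ b * ψ a = 0
  star_anticomm (a b : ℤ) : ψs a * ψs b + ψs b * ψs a = 0
  anticomm_star_self (a : ℤ) : ψ a * ψs a + ψs a * ψ a = 1
  anticomm_star_of_ne {a b : ℤ} (hab : a ≠ b) : ψ a * ψs b + ψs b * ψ a = 0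

def cliffordGen {R : Type*} [Ring R] (ψ ψs : ℤ → R) (m : ℤ) : R :=
  if m % 2 = 0 then ψ (m / 2) else ψs ((m + 1) / 2) + ψs ((m + 1) / 2 - 1)

variable {R : Type*} [Ring R] {ψ ψs : ℤ → R}

lemma anticomm_add_left (x y z : R) :
    (x + y) * z + z * (x + y) = (x * z + z * x) + (y * z + z * y) := by
  noncomm_ring

lemma anticomm_add_right (x y z : R) :
    x * (y + z) + (y + z) * x = (x * y + y * x) + (x * z + z * x) := by
  noncomm_ring

lemma cliffordGen_two_mul (m : ℤ) : cliffordGen ψ ψs (2 * m) = ψ m := by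
  rw [cliffordGen, if_pos (by omega), Int.mul_ediv_cancel_left _ two_ne_zero]

lemma cliffordGen_two_mul_add_one (m : ℤ) :
    cliffordGen ψ ψs (2 * m + 1) = ψs (m + 1) + ψs m := by
  rw [cliffordGen, if_neg (by omega), show (2 * m + 1 + 1) / 2 = m + 1 by omega,
    add_sub_cancel_right]

namespace IsCAR

variable (h : IsCAR ψ ψs)
include h

lemma anticomm_star (a b : ℤ) : ψ a * ψs b + ψs b * ψ a = if a = b then 1 else 0 := by
  split_ifs with hab
  · exact hab ▸ h.anticomm_star_self a
  · exact h.anticomm_star_of_ne hab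

lemma cliffordGen_mul_self (i : ℤ) : cliffordGen ψ ψs i * cliffordGen ψ ψs i = 0 := by
  obtain ⟨m, rfl | rfl⟩ := Int.even_or_odd' i
  · rw [cliffordGen_two_mul, h.mul_self]
  · rw [cliffordGen_two_mul_add_one]
    calc (ψs (m + 1) + ψs m) * (ψs (m + 1) + ψs m)
        = ψs (m + 1) * ψs (m + 1) + ψs m * ψs m +
            (ψs (m + 1) * ψs m + ψs m * ψs (m + 1)) := by noncomm_ring
      _ = 0 := by rw [h.star_mul_self, h.star_mul_self, h.star_anticomm, add_zero, add_zero]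

lemma cliffordGen_anticomm (i j : ℤ) :
    cliffordGen ψ ψs i * cliffordGen ψ ψs j + cliffordGen ψ ψs j * cliffordGen ψ ψs i =
      if |i - j| = 1 then 1 else 0 := by
  simp only [abs_eq (zero_le_one' ℤ)]
  obtain ⟨m, rfl | rfl⟩ := Int.even_or_odd' i <;>
    obtain ⟨n, rfl | rfl⟩ := Int.even_or_odd' j
  · rw [cliffordGen_two_mul, cliffordGen_two_mul, h.anticomm, if_neg (by omega)]
  · rw [cliffordGen_two_mul, cliffordGen_two_mul_add_one, anticomm_add_right, h.anticomm_star,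
      h.anticomm_star]
    split_ifs <;> first | omega | simp
  · rw [cliffordGen_two_mul, cliffordGen_two_mul_add_one, add_comm (_ * _), anticomm_add_right,
      h.anticomm_star, h.anticomm_star]
    split_ifs <;> first | omega | simp
  · rw [cliffordGen_two_mul_add_one, cliffordGen_two_mul_add_one, anticomm_add_left,
      anticomm_add_right, anticomm_add_right, if_neg (by omega)]
    simp only [h.star_anticomm, add_zero]

end IsCAR

end CAR

lemma range_insSeq (x : ℕ → ℤ) (p : ℕ) (a : ℤ) :
    range (insSeq x p a) = insert a (range x) := by
  ext v
  simp only [mem_range, mem_insert_iff, insSeq]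
  constructor
  · rintro ⟨i, rfl⟩
    split_ifs
    exacts [Or.inr ⟨i, rfl⟩, Or.inl rfl, Or.inr ⟨i - 1, rfl⟩]
  · rintro (rfl | ⟨i, rfl⟩)
    · exact ⟨p, by simp⟩
    · by_cases hi : i < p
      · exact ⟨i, by simp [hi]⟩
      · exact ⟨i + 1, by simp [show ¬ i + 1 < p by omega, show i + 1 ≠ p by omega]⟩

lemma range_delSeq {x : ℕ → ℤ} (hx : Function.Injective x) (p : ℕ) :
    range (delSeq x p) = range x \ {x p} := by
  ext v
  simp only [mem_range, mem_sdiff, mem_singleton_iff, delSeq]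
  constructor
  · rintro ⟨i, rfl⟩
    split_ifs with hi
    · exact ⟨⟨i, rfl⟩, fun h => by have := hx h; omega⟩
    · exact ⟨⟨i + 1, rfl⟩, fun h => by have := hx h; omega⟩
  · rintro ⟨⟨i, rfl⟩, hne⟩
    rcases lt_trichotomy i p with hi | rfl | hi
    · exact ⟨i, by simp [hi]⟩
    · exact absurd rfl hne
    · exact ⟨i - 1, by simp [show ¬ i - 1 < p by omega, show i - 1 + 1 = i by omega]⟩

namespace IM

lemma ext_range {x y : IM} (h : range x.1 = range y.1) : x = y :=
  Subtype.ext ((x.2.1.range_inj y.2.1).1 h)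

lemma apply_posIdx_eq_iff (j : ℤ) (x : IM) :
    x.1 (posIdx j x) = 2 * j ↔ 2 * j ∈ range x.1 := by
  refine ⟨fun h => ⟨_, h⟩, fun ⟨n, hn⟩ => ?_⟩
  have hle : posIdx j x ≤ n := Nat.find_le hn.symm.le
  rcases hle.lt_or_eq with hlt | rfl
  · have := posIdx_le j x
    have := x.2.1 hlt
    omega
  · exact hn

lemma range_inter_Iio (j : ℤ) (x : IM) :
    range x.1 ∩ Iio (2 * j) = x.1 '' Iio (posIdx j x) := by
  ext v
  simp only [mem_inter_iff, mem_range, mem_Iio, mem_image]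
  constructor
  · rintro ⟨⟨i, rfl⟩, hi⟩
    refine ⟨i, ?_, rfl⟩
    by_contra! h
    exact (hi.trans_le (posIdx_le j x)).not_ge (x.2.1.monotone h)
  · rintro ⟨i, hi, rfl⟩
    exact ⟨⟨i, rfl⟩, posIdx_lt j x i hi⟩

lemma posIdx_eq_ncard (j : ℤ) (x : IM) : posIdx j x = (range x.1 ∩ Iio (2 * j)).ncard := by
  rw [range_inter_Iio, ncard_image_of_injective _ x.2.1.injective, ncard_Iio_nat]

lemma finite_range_inter_Iio (j : ℤ) (x : IM) : (range x.1 ∩ Iio (2 * j)).Finite := by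
  rw [range_inter_Iio]
  exact (finite_Iio _).image _

end IM

noncomputable def IM.insert (j : ℤ) (x : IM) : IM :=
  if h : x.1 (posIdx j x) = 2 * j then x
  else ⟨insSeq x.1 (posIdx j x) (2 * j), insSeq_mem x.1 x.2 _ _ (even_two_mul j)
    (posIdx_lt j x) ((posIdx_le j x).lt_of_ne' h)⟩

noncomputable def IM.erase (j : ℤ) (x : IM) : IM :=
  if x.1 (posIdx j x) = 2 * j then ⟨delSeq x.1 (posIdx j x), delSeq_mem x.1 x.2 _⟩ else x

@[simp]
lemma IM.range_insert (j : ℤ) (x : IM) :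
    range (x.insert j).1 = Insert.insert (2 * j) (range x.1) := by
  by_cases h : x.1 (posIdx j x) = 2 * j
  · rw [show x.insert j = x from dif_pos h]
    exact (insert_eq_of_mem ((x.apply_posIdx_eq_iff j).1 h)).symm
  · simp only [IM.insert, h, ↓reduceDIte]
    exact range_insSeq _ _ _

@[simp]
lemma IM.range_erase (j : ℤ) (x : IM) : range (x.erase j).1 = range x.1 \ {2 * j} := by
  by_cases h : x.1 (posIdx j x) = 2 * j
  · simp only [IM.erase, h]
    rw [← h]
    exact range_delSeq x.2.1.injective _
  · rw [show x.erase j = x from if_neg h]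
    exact (sdiff_singleton_eq_self (mt (x.apply_posIdx_eq_iff j).2 h)).symm

namespace IM

lemma two_mul_mem_range_insert {a b : ℤ} {x : IM} :
    2 * a ∈ range (x.insert b).1 ↔ a = b ∨ 2 * a ∈ range x.1 := by
  simp

lemma two_mul_mem_range_erase {a b : ℤ} {x : IM} :
    2 * a ∈ range (x.erase b).1 ↔ a ≠ b ∧ 2 * a ∈ range x.1 := by
  simp [and_comm]

lemma insert_comm (a b : ℤ) (x : IM) : (x.insert b).insert a = (x.insert a).insert b :=
  ext_range (by simp only [range_insert, Set.insert_comm])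

lemma erase_comm (a b : ℤ) (x : IM) : (x.erase b).erase a = (x.erase a).erase b :=
  ext_range (by simp only [range_erase, sdiff_sdiff_comm])

lemma insert_erase_comm {a b : ℤ} (hab : a ≠ b) (x : IM) :
    (x.erase b).insert a = (x.insert a).erase b :=
  ext_range (by
    rw [range_insert, range_erase, range_erase, range_insert,
      insert_sdiff_singleton_comm (by omega)])

lemma insert_erase {j : ℤ} {x : IM} (h : 2 * j ∈ range x.1) : (x.erase j).insert j = x :=
  ext_range (by rw [range_insert, range_erase, insert_sdiff_singleton, insert_eq_of_mem h])

lemma erase_insert {j : ℤ} {x : IM} (h : 2 * j ∉ range x.1) : (x.insert j).erase j = x :=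
  ext_range (by rw [range_erase, range_insert, insert_sdiff_self_of_notMem h])

lemma posIdx_insert (a : ℤ) {b : ℤ} {x : IM} (h : 2 * b ∉ range x.1) :
    posIdx a (x.insert b) = posIdx a x + if b < a then 1 else 0 := by
  rw [posIdx_eq_ncard, posIdx_eq_ncard, range_insert]
  split_ifs with hba
  · rw [insert_inter_of_mem (by simpa using hba), ncard_insert_of_notMem (fun h' => h h'.1)
      (finite_range_inter_Iio a x)]
  · rw [insert_inter_of_notMem (by simpa using hba), add_zero]

lemma posIdx_erase (a : ℤ) {b : ℤ} {x : IM} (h : 2 * b ∈ range x.1) :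
    posIdx a (x.erase b) + (if b < a then 1 else 0) = posIdx a x := by
  conv_rhs => rw [← insert_erase h]
  rw [posIdx_insert a (by simp)]

end IM

section Fock

open scoped Classical

lemma psiOp_single (j : ℤ) (x : IM) :
    psiOp j (Finsupp.single x 1) =
      if 2 * j ∈ range x.1 then 0
      else (-1 : ℤ) ^ posIdx j x • Finsupp.single (x.insert j) 1 := by
  rw [psiOp, Finsupp.lift_apply, Finsupp.sum_single_index (by simp), one_smul]
  by_cases h : x.1 (posIdx j x) = 2 * j
  · simp [psiB, h, (x.apply_posIdx_eq_iff j).1 h]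
  · simp only [psiB, IM.insert, h, ↓reduceDIte, mt (x.apply_posIdx_eq_iff j).2 h, ↓reduceIte]
    rfl

lemma psiStarOp_single (j : ℤ) (x : IM) :
    psiStarOp j (Finsupp.single x 1) =
      if 2 * j ∈ range x.1 then (-1 : ℤ) ^ posIdx j x • Finsupp.single (x.erase j) 1
      else 0 := by
  rw [psiStarOp, Finsupp.lift_apply, Finsupp.sum_single_index (by simp), one_smul]
  by_cases h : x.1 (posIdx j x) = 2 * j
  · simp only [psiStarB, IM.erase, h, ↓reduceDIte, (x.apply_posIdx_eq_iff j).1 h, ↓reduceIte]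
    rfl
  · simp [psiStarB, h, mt (x.apply_posIdx_eq_iff j).2 h]

end Fock

lemma psiOp_mul_self (a : ℤ) : psiOp a * psiOp a = 0 := by
  refine Finsupp.lhom_ext_single_one fun x => ?_
  by_cases ha : 2 * a ∈ range x.1 <;>
    simp only [Module.End.mul_apply, psiOp_single, ha, IM.two_mul_mem_range_insert, ite_true,
      ite_false, map_zero, map_smul, true_or, smul_zero, LinearMap.zero_apply]

lemma psiOp_anticomm (a b : ℤ) : psiOp a * psiOp b + psiOp b * psiOp a = 0 := by
  refine Finsupp.lhom_ext_single_one fun x => ?_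
  by_cases ha : 2 * a ∈ range x.1 <;> by_cases hb : 2 * b ∈ range x.1 <;>
    simp only [LinearMap.add_apply, Module.End.mul_apply, psiOp_single, ha, hb,
      IM.two_mul_mem_range_insert, ite_true, ite_false, map_zero, map_smul, or_true,
      smul_zero, LinearMap.zero_apply, add_zero, or_false]
  rcases eq_or_ne a b with rfl | hab
  · simp
  rw [if_neg hab, if_neg hab.symm, IM.posIdx_insert a hb, IM.posIdx_insert b ha,
    IM.insert_comm a b, smul_smul, smul_smul, ← pow_add, ← pow_add]
  exact neg_one_pow_smul_add_neg_one_pow_smul _ (Nat.odd_iff.2 (by split_ifs <;> omega))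

lemma psiStarOp_mul_self (a : ℤ) : psiStarOp a * psiStarOp a = 0 := by
  refine Finsupp.lhom_ext_single_one fun x => ?_
  by_cases ha : 2 * a ∈ range x.1 <;>
    simp only [Module.End.mul_apply, psiStarOp_single, ha, IM.two_mul_mem_range_erase, ite_true,
      ite_false, map_zero, map_smul, ne_eq, not_true, false_and, smul_zero, LinearMap.zero_apply]

lemma psiStarOp_anticomm (a b : ℤ) :
    psiStarOp a * psiStarOp b + psiStarOp b * psiStarOp a = 0 := by
  refine Finsupp.lhom_ext_single_one fun x => ?_
  by_cases ha : 2 * a ∈ range x.1 <;> by_cases hb : 2 * b ∈ range x.1 <;>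
    simp only [LinearMap.add_apply, Module.End.mul_apply, psiStarOp_single, ha, hb,
      IM.two_mul_mem_range_erase, ite_true, ite_false, map_zero, map_smul, and_true, and_false,
      smul_zero, LinearMap.zero_apply, add_zero]
  rcases eq_or_ne a b with rfl | hab
  · simp
  have hpa := IM.posIdx_erase a hb
  have hpb := IM.posIdx_erase b ha
  rw [if_pos hab, if_pos hab.symm, IM.erase_comm a b, smul_smul, smul_smul, ← pow_add,
    ← pow_add]
  exact neg_one_pow_smul_add_neg_one_pow_smul _ (Nat.odd_iff.2 (by split_ifs at hpa hpb <;> omega))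

lemma psiOp_anticomm_psiStarOp_self (a : ℤ) :
    psiOp a * psiStarOp a + psiStarOp a * psiOp a = 1 := by
  refine Finsupp.lhom_ext_single_one fun x => ?_
  by_cases ha : 2 * a ∈ range x.1 <;>
    simp only [LinearMap.add_apply, Module.End.mul_apply, psiOp_single, psiStarOp_single, ha,
      IM.two_mul_mem_range_insert, IM.two_mul_mem_range_erase, ite_true, ite_false, map_zero,
      map_smul, ne_eq, not_true, false_and, true_or, add_zero, zero_add, Module.End.one_apply]
  · have hp := IM.posIdx_erase a ha
    rw [if_neg (lt_irrefl a), add_zero] at hp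
    rw [IM.insert_erase ha, hp, smul_smul, ← pow_add, Even.neg_one_pow ⟨_, rfl⟩, one_smul]
  · rw [IM.erase_insert ha, IM.posIdx_insert a ha, if_neg (lt_irrefl a), add_zero, smul_smul,
      ← pow_add, Even.neg_one_pow ⟨_, rfl⟩, one_smul]

lemma psiOp_anticomm_psiStarOp_of_ne {a b : ℤ} (hab : a ≠ b) :
    psiOp a * psiStarOp b + psiStarOp b * psiOp a = 0 := by
  refine Finsupp.lhom_ext_single_one fun x => ?_
  by_cases ha : 2 * a ∈ range x.1 <;> by_cases hb : 2 * b ∈ range x.1 <;>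
    simp only [LinearMap.add_apply, Module.End.mul_apply, psiOp_single, psiStarOp_single, ha, hb,
      IM.two_mul_mem_range_insert, IM.two_mul_mem_range_erase, ite_true, ite_false, map_zero,
      map_smul, ne_eq, hab, hab.symm, not_false_eq_true, and_true, and_false, or_true, or_false,
      smul_zero, add_zero, LinearMap.zero_apply]
  have hpa := IM.posIdx_erase a hb
  rw [IM.posIdx_insert b ha, IM.insert_erase_comm hab, smul_smul, smul_smul, ← pow_add,
    ← pow_add]
  exact neg_one_pow_smul_add_neg_one_pow_smul _ (Nat.odd_iff.2 (by split_ifs at hpa ⊢ <;> omega))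

lemma isCAR_psiOp_psiStarOp : IsCAR psiOp psiStarOp where
  mul_self := psiOp_mul_self
  star_mul_self := psiStarOp_mul_self
  anticomm := psiOp_anticomm
  star_anticomm := psiStarOp_anticomm
  anticomm_star_self := psiOp_anticomm_psiStarOp_self
  anticomm_star_of_ne := psiOp_anticomm_psiStarOp_of_ne

/-- The operators `t_i` on the fermionic Fock space `V_F` satisfy the Clifford
relations: `t_i² = 0`, `t_i t_j + t_j t_i = 0` for `|i−j| > 1`, and
`t_i t_{i+1} + t_{i+1} t_i = id`. -/
theorem tOp_clifford_relations (i j : ℤ) :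
    (tOp i) ∘ₗ (tOp i) = 0 ∧
    (1 < |i - j| → (tOp i) ∘ₗ (tOp j) + (tOp j) ∘ₗ (tOp i) = 0) ∧
    (tOp i) ∘ₗ (tOp (i + 1)) + (tOp (i + 1)) ∘ₗ (tOp i) = LinearMap.id := by
  -- `tOp = cliffordGen psiOp psiStarOp` and `f ∘ₗ g = f * g` hold by `rfl`.
  have h := isCAR_psiOp_psiStarOp
  refine ⟨h.cliffordGen_mul_self i, fun hij => ?_, ?_⟩
  · exact (h.cliffordGen_anticomm i j).trans (if_neg hij.ne')
  · exact (h.cliffordGen_anticomm i (i + 1)).trans (if_pos (by simp))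
end

section
/- For integers s and t with t ≥ 1, define f(s,t) = Σ_{j=0}^{t−1} (−1)^{s+t−1−j} · invfac(s+t−1−j) · (1/j!) ∈ ℚ. Then: if s > 0, f(s,t) = (−1)^s / ((s−1)! · (t−1)! · (s+t−1)); and if s ≤ 0, then f(s,t) = 1 when s + t = 1 and f(s,t) = 0 otherwise. -/
/-! With `N = s + t - 1`, the `j`-th summand of `f(s,t)` is `(-1)^N / N! · (-1)^j · C(N, j)`
for `j ≤ N` and vanishes for `j > N`. Partial alternating sums of a row of Pascal's triangle
telescope, `∑_{j ≤ k} (-1)^j C(N, j) = (-1)^k C(N - 1, k)`. For `s > 0` the sum is cut at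
`k = t - 1 < N`, and `C(N - 1, t - 1) / N!` is `1 / ((s - 1)! (t - 1)! N)`; for `s ≤ 0` it is the
full row, `(1 - 1)^N / N!`. -/

/-- `invfac m = 1/m!` for `m ≥ 0`, and `0` for `m < 0`. -/
noncomputable def invfac (m : ℤ) : ℚ := if 0 ≤ m then ((m.toNat).factorial : ℚ)⁻¹ else 0

/-- `msign i = (−1)^i` for an integer `i`. -/
def msign (i : ℤ) : ℚ := if Even i then 1 else -1

/-- `f(s,t) = Σ_{j=0}^{t−1} (−1)^{s+t−1−j} · invfac(s+t−1−j) · (1/j!)`. -/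
noncomputable def fST (s : ℤ) (t : ℕ) : ℚ :=
  ∑ j ∈ Finset.range t,
    msign (s + t - 1 - j) * invfac (s + t - 1 - j) * ((Nat.factorial j : ℚ))⁻¹

open Nat Finset

lemma msign_natCast (n : ℕ) : msign n = (-1) ^ n := by
  rcases Nat.even_or_odd n with h | h
  · simp [msign, h, h.neg_one_pow]
  · simp [msign, Nat.not_even_iff_odd.mpr h, h.neg_one_pow]

lemma invfac_natCast (n : ℕ) : invfac n = (n ! : ℚ)⁻¹ := by
  simp [invfac]

lemma invfac_of_neg {m : ℤ} (h : m < 0) : invfac m = 0 := by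
  simp [invfac, not_le.mpr h]

section

variable {K : Type*} [Field K] [CharZero K]

lemma neg_one_pow_sub_div_factorial_mul_factorial {n j : ℕ} (hj : j ≤ n) :
    (-1 : K) ^ (n - j) / ((n - j)! * j !) = (-1) ^ n / n ! * ((-1) ^ j * n.choose j) := by
  have hsign : (-1 : K) ^ (n - j) = (-1) ^ n * (-1) ^ j := by
    rw [pow_sub₀ _ (by norm_num) hj, ← inv_pow, inv_neg_one]
  have hn : (n ! : K) ≠ 0 := mod_cast n.factorial_ne_zero
  rw [hsign, Nat.cast_choose K hj]
  field_simp

lemma sum_range_neg_one_pow_sub_div_factorial_mul_factorial {n k : ℕ} (hk : k ≤ n) :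
    ∑ j ∈ range (k + 1), (-1 : K) ^ (n - j) / ((n - j)! * j !) =
      (-1) ^ n / n ! * ∑ j ∈ range (k + 1), (-1) ^ j * (n.choose j : K) := by
  rw [mul_sum]
  exact sum_congr rfl fun j hj ↦
    neg_one_pow_sub_div_factorial_mul_factorial (by have := mem_range.mp hj; omega)

lemma sum_range_add_neg_one_pow_sub_div_factorial_mul_factorial (m u : ℕ) :
    ∑ j ∈ range (u + 1), (-1 : K) ^ (m + u + 1 - j) / ((m + u + 1 - j)! * j !) =
      (-1) ^ (m + 1) / (m ! * u ! * (m + u + 1)) := by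
  have hrow := congrArg (Int.cast : ℤ → K)
    (Int.alternating_sum_range_choose_eq_choose (n := m + u) (m := u))
  push_cast at hrow
  rw [sum_range_neg_one_pow_sub_div_factorial_mul_factorial (by omega), hrow,
    ← Nat.choose_symm_add, Nat.cast_add_choose, Nat.factorial_succ]
  have hsign : (-1 : K) ^ (m + u + 1) * (-1) ^ u = (-1) ^ (m + 1) := by
    rw [add_right_comm, pow_add, mul_assoc, ← pow_add, Even.neg_one_pow ⟨u, rfl⟩, mul_one]
  have hm : (m ! : K) ≠ 0 := mod_cast m.factorial_ne_zero
  have hu : (u ! : K) ≠ 0 := mod_cast u.factorial_ne_zero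
  have hmu : ((m + u) ! : K) ≠ 0 := mod_cast (m + u).factorial_ne_zero
  have hN : (m + u + 1 : K) ≠ 0 := mod_cast (m + u).succ_ne_zero
  push_cast
  field_simp
  linear_combination hsign

lemma sum_range_succ_neg_one_pow_sub_div_factorial_mul_factorial (n : ℕ) :
    ∑ j ∈ range (n + 1), (-1 : K) ^ (n - j) / ((n - j)! * j !) = if n = 0 then 1 else 0 := by
  have hrow := congrArg (Int.cast : ℤ → K) (Int.alternating_sum_range_choose (n := n))
  push_cast at hrow
  rw [sum_range_neg_one_pow_sub_div_factorial_mul_factorial le_rfl, hrow]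
  split_ifs with hn <;> simp [hn]

end

lemma fST_eq_sum_range_min {s : ℤ} {t n : ℕ} (hn : s + t - 1 = n) :
    fST s t = ∑ j ∈ range (min t (n + 1)), (-1 : ℚ) ^ (n - j) / ((n - j)! * j !) := by
  have hvanish : ∀ j ∈ range t, j ∉ range (min t (n + 1)) →
      msign (s + t - 1 - j) * invfac (s + t - 1 - j) * (j ! : ℚ)⁻¹ = 0 := by
    intro j hjt hjn
    simp only [mem_range, lt_min_iff, not_and_or, not_lt] at hjt hjn
    rw [invfac_of_neg (by omega), mul_zero, zero_mul]
  rw [fST, ← sum_subset (range_subset_range.mpr (min_le_left _ _)) hvanish]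
  refine sum_congr rfl fun j hj ↦ ?_
  have hidx : s + t - 1 - j = (n - j : ℕ) := by
    have := mem_range.mp hj
    omega
  rw [hidx, msign_natCast, invfac_natCast, div_eq_mul_inv, mul_inv, mul_assoc]

lemma fST_of_add_lt_one {s : ℤ} {t : ℕ} (h : s + t < 1) : fST s t = 0 :=
  sum_eq_zero fun j _ ↦ by rw [invfac_of_neg (by omega), mul_zero, zero_mul]

/-- Evaluation of `f(s,t)` (equation (5.27) of the paper): for `s > 0`,
`f(s,t) = (−1)^s / ((s−1)!·(t−1)!·(s+t−1))`; for `s ≤ 0`, `f(s,t) = δ_{s+t,1}`. -/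
theorem fST_eval (s : ℤ) (t : ℕ) (ht : 1 ≤ t) :
    (0 < s → fST s t =
      msign s * ((((s - 1).toNat).factorial : ℚ))⁻¹ * (((t - 1).factorial : ℚ))⁻¹ *
        ((s : ℚ) + (t : ℚ) - 1)⁻¹) ∧
    (s ≤ 0 → fST s t = if s + (t : ℤ) = 1 then 1 else 0) := by
  constructor
  · intro hs
    obtain ⟨m, rfl⟩ : ∃ m : ℕ, s = m + 1 := ⟨(s - 1).toNat, by omega⟩
    obtain ⟨u, rfl⟩ : ∃ u : ℕ, t = u + 1 := ⟨t - 1, by omega⟩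
    rw [fST_eq_sum_range_min (n := m + u + 1) (by push_cast; ring), min_eq_left (by omega),
      sum_range_add_neg_one_pow_sub_div_factorial_mul_factorial]
    have hsign : msign (m + 1) = (-1) ^ (m + 1) := mod_cast msign_natCast (m + 1)
    simp only [hsign, add_sub_cancel_right, Int.toNat_natCast, Nat.add_sub_cancel,
      div_eq_mul_inv, mul_inv]
    push_cast
    ring
  · intro hs
    rcases lt_or_ge (s + t) 1 with hlt | hge
    · rw [fST_of_add_lt_one hlt, if_neg hlt.ne]
    · obtain ⟨n, hn⟩ : ∃ n : ℕ, s + t - 1 = n := ⟨(s + t - 1).toNat, by omega⟩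
      rw [fST_eq_sum_range_min hn, min_eq_right (by omega),
        sum_range_succ_neg_one_pow_sub_div_factorial_mul_factorial]
      exact if_congr (by omega) rfl rfl
end

section
/- Let k ≥ 1 and let λ̄_1 ≥ λ̄_2 ≥ … ≥ λ̄_k ≥ 0 be integers. Then the k×k matrix C over ℚ with entries C_{ij} = invfac(i − j + λ̄_j) for 1 ≤ i, j ≤ k is nonsingular, i.e. det C ≠ 0. -/
/-!
Reversing the rows turns the matrix into `(invfac (n_j - i))_{i,j}` with
`n_j = λ̄_{j+1} + (k - 1 - j)`, a strictly decreasing sequence of naturals.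
Multiplying column `j` by `n_j!` turns `invfac (n_j - i)` into the falling factorial
`n_j (n_j - 1) ⋯ (n_j - i + 1)`, which is the monic degree-`i` polynomial
`descPochhammer i` evaluated at `n_j`; so the rescaled matrix has the determinant of the
Vandermonde matrix of the distinct nodes `n_j`, which is nonzero.
-/

open Matrix Polynomial

theorem factorial_mul_invfac_sub (n r : ℕ) :
    (n.factorial : ℚ) * invfac ((n : ℤ) - r) = n.descFactorial r := by
  rcases le_or_gt r n with hrn | hnr
  · have hpos : (0 : ℚ) < (n - r).factorial := by exact_mod_cast (n - r).factorial_pos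
    rw [invfac, if_pos (by omega), show ((n : ℤ) - r).toNat = n - r by omega,
      ← Nat.factorial_mul_descFactorial hrn]
    push_cast
    field_simp
  · rw [invfac, if_neg (by omega), Nat.descFactorial_eq_zero_iff_lt.mpr hnr]
    simp

theorem det_invfac_sub_mul_prod_factorial {k : ℕ} (n : Fin k → ℕ) :
    (of fun i j : Fin k => invfac ((n j : ℤ) - i)).det * ∏ j, ((n j).factorial : ℚ) =
      (vandermonde fun j => (n j : ℚ)).det := by
  rw [← det_diagonal, ← det_mul, ← det_transpose,
    det_eval_matrixOfPolynomials_eq_det_vandermonde _ (fun i => descPochhammer ℚ i)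
      (fun i => descPochhammer_natDegree ℚ i) (fun i => monic_descPochhammer ℚ i)]
  congr 1
  ext i j
  simp only [transpose_apply, mul_diagonal, of_apply, descPochhammer_eval_eq_descFactorial]
  rw [mul_comm, factorial_mul_invfac_sub]

theorem det_invfac_sub_ne_zero {k : ℕ} {n : Fin k → ℕ} (hn : Function.Injective n) :
    (of fun i j : Fin k => invfac ((n j : ℤ) - i)).det ≠ 0 := by
  have hV : (vandermonde fun j => (n j : ℚ)).det ≠ 0 :=
    det_vandermonde_ne_zero_iff.mpr (Nat.cast_injective.comp hn)
  rw [← det_invfac_sub_mul_prod_factorial] at hV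
  exact left_ne_zero_of_mul hV

theorem antitoneOn_Icc_of_succ_le {α : Type*} [Preorder α] {k : ℕ} {f : ℕ → α}
    (hf : ∀ j, 1 ≤ j → j < k → f (j + 1) ≤ f j) : AntitoneOn f (Set.Icc 1 k) := by
  intro a ha b hb hab
  induction b, hab using Nat.le_induction with
  | base => exact le_rfl
  | succ b hab ih =>
    exact (hf b (ha.1.trans hab) hb.2).trans (ih ⟨ha.1.trans hab, (b.le_succ).trans hb.2⟩)

theorem matrix_C_nonsingular_general (k : ℕ) (lam : ℕ → ℕ)
    (hdec : ∀ j, 1 ≤ j → j < k → lam (j + 1) ≤ lam j) :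
    Matrix.det (Matrix.of fun i j : Fin k =>
      invfac ((i : ℤ) - (j : ℤ) + (lam (j.1 + 1) : ℤ))) ≠ 0 := by
  set n : Fin k → ℕ := fun j => lam (j + 1) + (k - 1 - j)
  have hn : StrictAnti n := by
    intro a b hab
    have hab : a.1 < b.1 := hab
    have hlam : lam (b + 1) ≤ lam (a + 1) :=
      antitoneOn_Icc_of_succ_le hdec ⟨by omega, by omega⟩ ⟨by omega, b.isLt⟩ (by omega)
    simp only [n]
    omega
  have hrev : (of fun i j : Fin k => invfac ((i : ℤ) - (j : ℤ) + (lam (j.1 + 1) : ℤ))).submatrix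
      Fin.revPerm id = of fun i j : Fin k => invfac ((n j : ℤ) - i) := by
    ext i j
    simp only [submatrix_apply, of_apply, Fin.revPerm_apply, Fin.val_rev, id, n]
    congr 1
    omega
  have h := det_invfac_sub_ne_zero hn.injective
  rw [← hrev, det_permute] at h
  exact right_ne_zero_of_mul h

/-- Lemma 5.9: for `k ≥ 1` and integers `λ̄_1 ≥ … ≥ λ̄_k ≥ 0`, the `k×k`
matrix over `ℚ` with entries `C_{ij} = invfac(i − j + λ̄_j)` (indices `1 ≤ i,j ≤ k`,
here realized with `0`-based `Fin k` indices) is nonsingular. -/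
theorem matrix_C_nonsingular (k : ℕ) (hk : 1 ≤ k) (lam : ℕ → ℕ)
    (hdec : ∀ j, 1 ≤ j → j < k → lam (j + 1) ≤ lam j) :
    Matrix.det (Matrix.of fun i j : Fin k =>
      invfac ((i : ℤ) - (j : ℤ) + (lam (j.1 + 1) : ℤ))) ≠ 0 :=
  matrix_C_nonsingular_general k lam hdec
end

section
/- Let μ_1 ≥ μ_2 ≥ … ≥ μ_t ≥ 1 be a partition with exactly t ≥ 1 parts, let s = μ_1, and let μ̄_j = #{i ∈ {1,…,t} : μ_i ≥ j} for 1 ≤ j ≤ s (the conjugate partition). Then ∏_{j=1}^{s}(j + t − μ̄_j) · ∏_{i=1}^{t}(μ_i + t + 1 − i) = (s+t)!. -/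
/-!
The numbers `μ_i + t + 1 - i` (`1 ≤ i ≤ t`) and `j + t - μ̄_j` (`1 ≤ j ≤ s`) together are exactly
`1, …, s + t`, each once (Macdonald, *Symmetric functions*, I.(1.7)). The first family is strictly
decreasing in `i` and the second strictly increasing in `j`, and both lie in `[1, s + t]`; they never
meet, because `i ≤ μ̄_j ↔ j ≤ μ_i` makes `j - μ̄_j` and `μ_i + 1 - i` land on opposite sides.
Counting, the `s + t` values fill the interval, so the product is `(s + t)!`.
-/

open Finset

theorem Finset.prod_comp_mul_prod_comp_eq_prod_of_injOn {α β γ M : Type*} [DecidableEq γ]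
    [CommMonoid M] {s : Finset α} {t : Finset β} {u : Finset γ} {f : α → γ} {g : β → γ}
    (h : γ → M) (hf : Set.InjOn f s) (hg : Set.InjOn g t) (hfu : ∀ a ∈ s, f a ∈ u)
    (hgu : ∀ b ∈ t, g b ∈ u) (hdisj : Disjoint (s.image f) (t.image g))
    (hcard : #u ≤ #s + #t) :
    (∏ a ∈ s, h (f a)) * ∏ b ∈ t, h (g b) = ∏ c ∈ u, h c := by
  have hunion : s.image f ∪ t.image g = u := by
    refine eq_of_subset_of_card_le (union_subset ?_ ?_) ?_
    · simpa [image_subset_iff] using hfu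
    · simpa [image_subset_iff] using hgu
    · rwa [card_union_of_disjoint hdisj, card_image_of_injOn hf, card_image_of_injOn hg]
  rw [← prod_image hf, ← prod_image hg, ← prod_union hdisj, hunion]

namespace HookProduct

def conj (t : ℕ) (mu : ℕ → ℕ) (j : ℕ) : ℕ := #{i ∈ Icc 1 t | j ≤ mu i}

def partShift (t : ℕ) (mu : ℕ → ℕ) (i : ℕ) : ℕ := mu i + t + 1 - i

def conjShift (t : ℕ) (mu : ℕ → ℕ) (j : ℕ) : ℕ := j + t - conj t mu j

variable {t : ℕ} {mu : ℕ → ℕ}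

theorem conj_le (j : ℕ) : conj t mu j ≤ t := by
  simpa [conj] using card_filter_le (Icc 1 t) (fun i => j ≤ mu i)

theorem conj_antitone : Antitone (conj t mu) := fun _ _ hjk =>
  card_le_card <| monotone_filter_right _ fun _ _ hk => hjk.trans hk

theorem conjShift_strictMono : StrictMono (conjShift t mu) := fun a b hab => by
  have := conj_antitone (t := t) (mu := mu) hab.le
  have := conj_le (t := t) (mu := mu) a
  simp only [conjShift]
  omega

theorem conjShift_mem_Icc {s j : ℕ} (hj : j ∈ Icc 1 s) : conjShift t mu j ∈ Icc 1 (s + t) := by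
  have := conj_le (t := t) (mu := mu) j
  rw [mem_Icc] at hj ⊢
  simp only [conjShift]
  omega

variable (hmu : AntitoneOn mu (Icc 1 t : Set ℕ))
include hmu

theorem le_conj_iff {i j : ℕ} (hi : i ∈ Icc 1 t) : i ≤ conj t mu j ↔ j ≤ mu i := by
  rw [mem_Icc] at hi
  constructor
  · intro hij
    by_contra! hlt
    have hsub : {k ∈ Icc 1 t | j ≤ mu k} ⊆ Icc 1 (i - 1) := fun k hk => by
      rw [mem_filter, mem_Icc] at hk
      rw [mem_Icc]
      by_contra! hik
      have := hmu (mem_Icc.mpr hi) (mem_Icc.mpr hk.1) (by omega : i ≤ k)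
      omega
    have := card_le_card hsub
    simp only [Nat.card_Icc, conj] at this hij
    omega
  · intro hji
    have hsub : Icc 1 i ⊆ {k ∈ Icc 1 t | j ≤ mu k} := fun k hk => by
      rw [mem_Icc] at hk
      rw [mem_filter, mem_Icc]
      exact ⟨⟨hk.1, hk.2.trans hi.2⟩,
        hji.trans (hmu (mem_Icc.mpr ⟨hk.1, hk.2.trans hi.2⟩) (mem_Icc.mpr hi) hk.2)⟩
    simpa [conj] using card_le_card hsub

theorem partShift_strictAntiOn : StrictAntiOn (partShift t mu) (Icc 1 t : Set ℕ) :=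
  fun a ha b hb hab => by
    have := hmu ha hb hab.le
    have := mem_Icc.mp hb
    simp only [partShift]
    omega

theorem partShift_mem_Icc {i : ℕ} (hi : i ∈ Icc 1 t) : partShift t mu i ∈ Icc 1 (mu 1 + t) := by
  rw [mem_Icc] at hi ⊢
  have := hmu (mem_Icc.mpr ⟨le_rfl, hi.1.trans hi.2⟩) (mem_Icc.mpr hi) hi.1
  simp only [partShift]
  omega

theorem disjoint_image_partShift_conjShift (s : ℕ) :
    Disjoint ((Icc 1 t).image (partShift t mu)) ((Icc 1 s).image (conjShift t mu)) := by
  simp only [disjoint_left, mem_image, not_exists, not_and]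
  rintro _ ⟨i, hi, rfl⟩ j - heq
  have := le_conj_iff hmu (j := j) hi
  have := conj_le (t := t) (mu := mu) j
  rw [mem_Icc] at hi
  simp only [partShift, conjShift] at heq
  omega

end HookProduct

open HookProduct

theorem hook_product_identity_general (t : ℕ) (mu : ℕ → ℕ)
    (hdec : ∀ i, 1 ≤ i → i < t → mu (i + 1) ≤ mu i) :
    (∏ j ∈ Finset.Icc 1 (mu 1),
        (j + t - ((Finset.Icc 1 t).filter (fun i => j ≤ mu i)).card)) *
      (∏ i ∈ Finset.Icc 1 t, (mu i + t + 1 - i)) = (mu 1 + t).factorial := by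
  have hmu : AntitoneOn mu (Icc 1 t : Set ℕ) := by
    rw [coe_Icc]
    exact antitoneOn_of_add_one_le Set.ordConnected_Icc fun i _ hi hi' => hdec i hi.1 hi'.2
  have hprod := prod_comp_mul_prod_comp_eq_prod_of_injOn id (partShift_strictAntiOn hmu).injOn
    (conjShift_strictMono (t := t) (mu := mu)).injective.injOn (fun _ => partShift_mem_Icc hmu)
    (fun _ => conjShift_mem_Icc) (disjoint_image_partShift_conjShift hmu (mu 1))
    (by simp [add_comm])
  rw [mul_comm, ← Ico_add_one_right_eq_Icc] at hprod
  rw [← prod_Ico_id_eq_factorial]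
  exact hprod

/-- The Subclaim in the proof of Lemma 5.12: for a partition `μ_1 ≥ … ≥ μ_t ≥ 1`
with `t ≥ 1` parts, `s = μ_1`, and conjugate partition `μ̄_j = #{i : μ_i ≥ j}`,
one has `∏_{j=1}^{s} (j + t − μ̄_j) · ∏_{i=1}^{t} (μ_i + t + 1 − i) = (s+t)!`. -/
theorem hook_product_identity (t : ℕ) (ht : 1 ≤ t) (mu : ℕ → ℕ)
    (hdec : ∀ i, 1 ≤ i → i < t → mu (i + 1) ≤ mu i) (hpos : 1 ≤ mu t) :
    (∏ j ∈ Finset.Icc 1 (mu 1),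
        (j + t - ((Finset.Icc 1 t).filter (fun i => j ≤ mu i)).card)) *
      (∏ i ∈ Finset.Icc 1 t, (mu i + t + 1 - i)) = (mu 1 + t).factorial :=
  hook_product_identity_general t mu hdec
end
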